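/- Propositional team logic PT characterizes the set of all team properties containing the empty team: for every finite index set N = {i₁,…,iₙ}, (a) for every formula φ in the language of PT with variables among {p_i : i∈N}, the set {Y ⊆ 2^N : Y ⊨ φ} contains the empty team; and (b) for every set P ⊆ 𝒫(2^N) of teams on N with ∅ ∈ P, there is a formula φ in the language of PT with variables among {p_i : i∈N} such that for every team Y on N, Y ⊨ φ if and only if Y ∈ P. -/

import Mathlib

/-- Formulas of full propositional team logic (FPT), with propositional
variables indexed by a type `V`. -/
inductive PTForm (V : Type) : Type where
  | pos : V → PTForm V
  | neg : V → PTForm V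
  | bot : PTForm V
  | ne : PTForm V
  | dep : List V → V → PTForm V
  | indep : List V → List V → PTForm V
  | incl : List V → List V → PTForm V
  | and : PTForm V → PTForm V → PTForm V
  | tensor : PTForm V → PTForm V → PTForm V
  | nsor : PTForm V → PTForm V → PTForm V
  | bor : PTForm V → PTForm V → PTForm V

/-- Team semantics of full propositional team logic.  A valuation is a
function `V → Bool` and a team is a set of valuations. -/
def PTSat {V : Type} (X : Set (V → Bool)) : PTForm V → Prop
  | .pos i => ∀ s ∈ X, s i = true
  | .neg i => ∀ s ∈ X, s i = false
  | .bot => X = ∅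
  | .ne => X ≠ ∅
  | .dep xs y => ∀ s ∈ X, ∀ s' ∈ X, (∀ i ∈ xs, s i = s' i) → s y = s' y
  | .indep xs ys =>
      ∀ s ∈ X, ∀ s' ∈ X, ∃ s'' ∈ X,
        (∀ i ∈ xs, s'' i = s i) ∧ (∀ j ∈ ys, s'' j = s' j)
  | .incl xs ys => ∀ s ∈ X, ∃ s' ∈ X, ∀ p ∈ List.zip xs ys, s p.1 = s' p.2
  | .and φ ψ => PTSat X φ ∧ PTSat X ψ
  | .tensor φ ψ => ∃ Y Z, X = Y ∪ Z ∧ PTSat Y φ ∧ PTSat Z ψ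
  | .nsor φ ψ =>
      X = ∅ ∨ ∃ Y Z, X = Y ∪ Z ∧ Y.Nonempty ∧ Z.Nonempty ∧ PTSat Y φ ∧ PTSat Z ψ
  | .bor φ ψ => PTSat X φ ∨ PTSat X ψ

/-- The set of propositional variables occurring in a formula. -/
def PTForm.vars {V : Type} : PTForm V → Set V
  | .pos i => {i}
  | .neg i => {i}
  | .bot => ∅
  | .ne => ∅
  | .dep xs y => {i | i ∈ xs} ∪ {y}
  | .indep xs ys => {i | i ∈ xs} ∪ {j | j ∈ ys}
  | .incl xs ys => {i | i ∈ xs} ∪ {j | j ∈ ys}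
  | .and φ ψ => φ.vars ∪ ψ.vars
  | .tensor φ ψ => φ.vars ∪ ψ.vars
  | .nsor φ ψ => φ.vars ∪ ψ.vars
  | .bor φ ψ => φ.vars ∪ ψ.vars

/-- The formula does not contain the atom NE. -/
def PTForm.NEfree {V : Type} : PTForm V → Prop
  | .ne => False
  | .and φ ψ => φ.NEfree ∧ ψ.NEfree
  | .tensor φ ψ => φ.NEfree ∧ ψ.NEfree
  | .nsor φ ψ => φ.NEfree ∧ ψ.NEfree
  | .bor φ ψ => φ.NEfree ∧ ψ.NEfree
  | _ => True

/-- Classical formulas: built from `pᵢ`, `¬pᵢ`, `⊥` using only `∧` and `⊗`. -/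
inductive IsClassical {V : Type} : PTForm V → Prop where
  | pos (i : V) : IsClassical (.pos i)
  | neg (i : V) : IsClassical (.neg i)
  | bot : IsClassical .bot
  | and : ∀ {φ ψ}, IsClassical φ → IsClassical ψ → IsClassical (.and φ ψ)
  | tensor : ∀ {φ ψ}, IsClassical φ → IsClassical ψ → IsClassical (.tensor φ ψ)

/-- The language of strong propositional team logic PT⁺:
atoms `pᵢ`, `¬pᵢ`, `⊥`, `NE` and connectives `∧`, `⊗`, `∨`. -/
inductive IsPTPlus {V : Type} : PTForm V → Prop where
  | pos (i : V) : IsPTPlus (.pos i)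
  | neg (i : V) : IsPTPlus (.neg i)
  | bot : IsPTPlus .bot
  | ne : IsPTPlus .ne
  | and : ∀ {φ ψ}, IsPTPlus φ → IsPTPlus ψ → IsPTPlus (.and φ ψ)
  | tensor : ∀ {φ ψ}, IsPTPlus φ → IsPTPlus ψ → IsPTPlus (.tensor φ ψ)
  | bor : ∀ {φ ψ}, IsPTPlus φ → IsPTPlus ψ → IsPTPlus (.bor φ ψ)

/-- The language of propositional team logic PT:
atoms `pᵢ`, `¬pᵢ`, `⊥` and connectives `∧`, `⊛`, `∨`. -/
inductive IsPT {V : Type} : PTForm V → Prop where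
  | pos (i : V) : IsPT (.pos i)
  | neg (i : V) : IsPT (.neg i)
  | bot : IsPT .bot
  | and : ∀ {φ ψ}, IsPT φ → IsPT ψ → IsPT (.and φ ψ)
  | nsor : ∀ {φ ψ}, IsPT φ → IsPT ψ → IsPT (.nsor φ ψ)
  | bor : ∀ {φ ψ}, IsPT φ → IsPT ψ → IsPT (.bor φ ψ)

/-- The language of propositional union closed logic PU:
atoms `pᵢ`, `¬pᵢ`, `⊥` and connectives `∧`, `⊗`, `⊛`. -/
inductive IsPU {V : Type} : PTForm V → Prop where
  | pos (i : V) : IsPU (.pos i)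
  | neg (i : V) : IsPU (.neg i)
  | bot : IsPU .bot
  | and : ∀ {φ ψ}, IsPU φ → IsPU ψ → IsPU (.and φ ψ)
  | tensor : ∀ {φ ψ}, IsPU φ → IsPU ψ → IsPU (.tensor φ ψ)
  | nsor : ∀ {φ ψ}, IsPU φ → IsPU ψ → IsPU (.nsor φ ψ)

/-- The language of strong propositional union closed logic PU⁺:
atoms `pᵢ`, `¬pᵢ`, `⊥`, `NE` and connectives `∧`, `⊗`, `⊛`. -/
inductive IsPUPlus {V : Type} : PTForm V → Prop where
  | pos (i : V) : IsPUPlus (.pos i)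
  | neg (i : V) : IsPUPlus (.neg i)
  | bot : IsPUPlus .bot
  | ne : IsPUPlus .ne
  | and : ∀ {φ ψ}, IsPUPlus φ → IsPUPlus ψ → IsPUPlus (.and φ ψ)
  | tensor : ∀ {φ ψ}, IsPUPlus φ → IsPUPlus ψ → IsPUPlus (.tensor φ ψ)
  | nsor : ∀ {φ ψ}, IsPUPlus φ → IsPUPlus ψ → IsPUPlus (.nsor φ ψ)

/-- The atom-free team language: atoms `pᵢ`, `¬pᵢ`, `⊥`, `NE` and
connectives `∧`, `⊗`, `⊛`, `∨` (no dependence/independence/inclusion atoms). -/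
inductive IsAtomFree {V : Type} : PTForm V → Prop where
  | pos (i : V) : IsAtomFree (.pos i)
  | neg (i : V) : IsAtomFree (.neg i)
  | bot : IsAtomFree .bot
  | ne : IsAtomFree .ne
  | and : ∀ {φ ψ}, IsAtomFree φ → IsAtomFree ψ → IsAtomFree (.and φ ψ)
  | tensor : ∀ {φ ψ}, IsAtomFree φ → IsAtomFree ψ → IsAtomFree (.tensor φ ψ)
  | nsor : ∀ {φ ψ}, IsAtomFree φ → IsAtomFree ψ → IsAtomFree (.nsor φ ψ)
  | bor : ∀ {φ ψ}, IsAtomFree φ → IsAtomFree ψ → IsAtomFree (.bor φ ψ)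

/-- The literal `pᵢ^{s(i)}`, i.e. `pᵢ` if `s i = 1` and `¬pᵢ` if `s i = 0`. -/
def PTlit {V : Type} (s : V → Bool) (i : V) : PTForm V :=
  if s i then .pos i else .neg i

/-- Conjunction of a nonempty list headed by the first argument. -/
def PTandAux {V : Type} : PTForm V → List (PTForm V) → PTForm V
  | φ, [] => φ
  | φ, ψ :: l => .and φ (PTandAux ψ l)

/-- Conjunction of a list of formulas (only used on nonempty lists). -/
def PTandList {V : Type} : List (PTForm V) → PTForm V
  | [] => .bot
  | φ :: l => PTandAux φ l

/-- The formula `p_{i₁}^{s(i₁)} ∧ … ∧ p_{iₙ}^{s(iₙ)}` describing the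
valuation `s`, where `{i₁, …, iₙ}` enumerates all of `V`. -/
noncomputable def PTdescr {V : Type} [Fintype V] (s : V → Bool) : PTForm V :=
  PTandList ((Finset.univ : Finset V).toList.map (PTlit s))

/-- Tensor disjunction `⊗` of a list of formulas; the empty tensor
disjunction is `⊥`. -/
def PTtensorList {V : Type} (l : List (PTForm V)) : PTForm V :=
  l.foldr PTForm.tensor PTForm.bot

/-- Nonempty disjunction `⊛` of a nonempty list headed by the first argument. -/
def PTnsorAux {V : Type} : PTForm V → List (PTForm V) → PTForm V
  | φ, [] => φ
  | φ, ψ :: l => .nsor φ (PTnsorAux ψ l)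

/-- Nonempty disjunction `⊛` of a list of formulas; the empty nonempty
disjunction is `⊥`. -/
def PTnsorList {V : Type} : List (PTForm V) → PTForm V
  | [] => .bot
  | φ :: l => PTnsorAux φ l

/-- Boolean disjunction `∨` of a list of formulas; the empty Boolean
disjunction is `⊥ ∧ NE`. -/
def PTborList {V : Type} (l : List (PTForm V)) : PTForm V :=
  l.foldr PTForm.bor (PTForm.and PTForm.bot PTForm.ne)

/-- The formula `Θ_X := ⊗_{s∈X} (p_{i₁}^{s(i₁)} ∧ … ∧ p_{iₙ}^{s(iₙ)})`. -/
noncomputable def PTtheta {V : Type} [Fintype V] (X : Finset (V → Bool)) : PTForm V :=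
  PTtensorList (X.toList.map PTdescr)

/-- The formula `Θ*_X := ⊗_{s∈X} (p_{i₁}^{s(i₁)} ∧ … ∧ p_{iₙ}^{s(iₙ)} ∧ NE)`. -/
noncomputable def PTthetaStar {V : Type} [Fintype V] (X : Finset (V → Bool)) : PTForm V :=
  PTtensorList (X.toList.map (fun s => .and (PTdescr s) .ne))

/-- The formula `Θ**_X := ⊛_{s∈X} (p_{i₁}^{s(i₁)} ∧ … ∧ p_{iₙ}^{s(iₙ)})`. -/
noncomputable def PTthetaSS {V : Type} [Fintype V] (X : Finset (V → Bool)) : PTForm V :=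
  PTnsorList (X.toList.map PTdescr)

/-- Logical consequence: every team satisfying all formulas of `Γ`
satisfies `φ`. -/
def PTEntails {V : Type} (Γ : Set (PTForm V)) (φ : PTForm V) : Prop :=
  ∀ X : Set (V → Bool), (∀ ψ ∈ Γ, PTSat X ψ) → PTSat X φ

/-- A team property is flat if a team is in it iff all its singleton
subteams are. -/
def IsFlat {V : Type} (P : Set (Set (V → Bool))) : Prop :=
  ∀ X : Set (V → Bool), X ∈ P ↔ ∀ s ∈ X, ({s} : Set (V → Bool)) ∈ P

/-- A team property is union closed if it is closed under unions of
nonempty subfamilies. -/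
def IsUnionClosed {V : Type} (P : Set (Set (V → Bool))) : Prop :=
  ∀ 𝒳 ⊆ P, 𝒳.Nonempty → ⋃₀ 𝒳 ∈ P

/-- The syntactic De Morgan negation of a classical formula. -/
def PTdeMorgan : PTForm ℕ → PTForm ℕ
  | .pos i => .neg i
  | .neg i => .pos i
  | .bot => .tensor (.pos 0) (.neg 0)
  | .and φ ψ => .tensor (PTdeMorgan φ) (PTdeMorgan ψ)
  | .tensor φ ψ => .and (PTdeMorgan φ) (PTdeMorgan ψ)
  | φ => φ

/-- Application of a substitution `σ` (assigning a formula to each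
propositional variable) to a formula of the atom-free team language. -/
def PTsubst (σ : ℕ → PTForm ℕ) : PTForm ℕ → PTForm ℕ
  | .pos i => σ i
  | .neg i => PTdeMorgan (σ i)
  | .and φ ψ => .and (PTsubst σ φ) (PTsubst σ ψ)
  | .tensor φ ψ => .tensor (PTsubst σ φ) (PTsubst σ ψ)
  | .nsor φ ψ => .nsor (PTsubst σ φ) (PTsubst σ ψ)
  | .bor φ ψ => .bor (PTsubst σ φ) (PTsubst σ ψ)
  | φ => φ

open Classical in
/-- The valuation `s_σ`, with `s_σ(i) = 1` iff `{s} ⊨ σ(pᵢ)`. -/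
noncomputable def PTvalSubst (σ : ℕ → PTForm ℕ) (s : ℕ → Bool) : ℕ → Bool :=
  fun i => if PTSat {s} (σ i) then true else false

/-!
Every PT formula holds in the empty team, since `p_i`, `¬p_i` hold there vacuously and `⊛`
has the empty team as an explicit case. Conversely, a team `X` is described up to the empty
team by `Θ**_X = ⊛_{s ∈ X} χ_s`, where `χ_s` is the conjunction of literals satisfied
exactly by the subteams of `{s}`: the nonemptiness required of both sides of `⊛` forces every
`s ∈ X` into the team. The Boolean disjunction of `Θ**_X` over the finitely many `X ∈ P`,
padded with `⊥`, then defines `P`.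
-/

variable {V : Type}

theorem IsPT.ptSat_empty {φ : PTForm V} (h : IsPT φ) : PTSat (∅ : Set (V → Bool)) φ := by
  induction h with
  | pos i => simp [PTSat]
  | neg i => simp [PTSat]
  | bot => rfl
  | and _ _ ih₁ ih₂ => exact ⟨ih₁, ih₂⟩
  | nsor _ _ _ _ => exact Or.inl rfl
  | bor _ _ ih _ => exact Or.inl ih

theorem IsPT.lit (s : V → Bool) (i : V) : IsPT (PTlit s i) := by
  unfold PTlit
  split
  · exact .pos i
  · exact .neg i

theorem ptSat_lit_iff (Y : Set (V → Bool)) (s : V → Bool) (i : V) :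
    PTSat Y (PTlit s i) ↔ ∀ t ∈ Y, t i = s i := by
  cases h : s i <;> simp [PTlit, PTSat, h]

theorem IsPT.andAux {φ : PTForm V} {l : List (PTForm V)} (hφ : IsPT φ)
    (hl : ∀ ψ ∈ l, IsPT ψ) : IsPT (PTandAux φ l) := by
  induction l generalizing φ with
  | nil => exact hφ
  | cons χ r ih =>
    simp only [List.mem_cons, forall_eq_or_imp] at hl
    exact .and hφ (ih hl.1 hl.2)

theorem IsPT.andList {l : List (PTForm V)} (hl : ∀ ψ ∈ l, IsPT ψ) : IsPT (PTandList l) := by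
  cases l with
  | nil => exact .bot
  | cons φ r =>
    simp only [List.mem_cons, forall_eq_or_imp] at hl
    exact .andAux hl.1 hl.2

theorem ptSat_andAux_iff (Y : Set (V → Bool)) (φ : PTForm V) (l : List (PTForm V)) :
    PTSat Y (PTandAux φ l) ↔ ∀ ψ ∈ φ :: l, PTSat Y ψ := by
  induction l generalizing φ with
  | nil => simp [PTandAux]
  | cons χ r ih =>
    simp only [PTandAux, PTSat, ih, List.forall_mem_cons]

theorem ptSat_andList_iff (Y : Set (V → Bool)) {l : List (PTForm V)} (hl : l ≠ []) :
    PTSat Y (PTandList l) ↔ ∀ ψ ∈ l, PTSat Y ψ := by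
  cases l with
  | nil => exact absurd rfl hl
  | cons φ r => exact ptSat_andAux_iff Y φ r

theorem IsPT.nsorAux {φ : PTForm V} {l : List (PTForm V)} (hφ : IsPT φ)
    (hl : ∀ ψ ∈ l, IsPT ψ) : IsPT (PTnsorAux φ l) := by
  induction l generalizing φ with
  | nil => exact hφ
  | cons χ r ih =>
    simp only [List.mem_cons, forall_eq_or_imp] at hl
    exact .nsor hφ (ih hl.1 hl.2)

theorem IsPT.nsorList {l : List (PTForm V)} (hl : ∀ ψ ∈ l, IsPT ψ) : IsPT (PTnsorList l) := by
  cases l with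
  | nil => exact .bot
  | cons φ r =>
    simp only [List.mem_cons, forall_eq_or_imp] at hl
    exact .nsorAux hl.1 hl.2

theorem IsPT.foldr_bor {l : List (PTForm V)} (hl : ∀ ψ ∈ l, IsPT ψ) :
    IsPT (l.foldr PTForm.bor PTForm.bot) := by
  induction l with
  | nil => exact .bot
  | cons φ r ih =>
    simp only [List.mem_cons, forall_eq_or_imp] at hl
    exact .bor hl.1 (ih hl.2)

theorem ptSat_foldr_bor_iff (Y : Set (V → Bool)) (l : List (PTForm V)) :
    PTSat Y (l.foldr PTForm.bor PTForm.bot) ↔ Y = ∅ ∨ ∃ ψ ∈ l, PTSat Y ψ := by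
  induction l with
  | nil => simp [PTSat]
  | cons φ r ih =>
    simp only [List.foldr_cons, PTSat, ih, List.mem_cons, exists_eq_or_imp]
    tauto

section Fintype

variable [Fintype V]

theorem IsPT.descr (s : V → Bool) : IsPT (PTdescr s) :=
  .andList fun _ hψ => by
    obtain ⟨i, -, rfl⟩ := List.mem_map.mp hψ
    exact .lit s i

theorem IsPT.thetaSS (X : Finset (V → Bool)) : IsPT (PTthetaSS X) :=
  .nsorList fun _ hψ => by
    obtain ⟨s, -, rfl⟩ := List.mem_map.mp hψ
    exact .descr s

open Classical in
noncomputable def PTdefining (P : Set (Set (V → Bool))) : PTForm V :=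
  ((Finset.univ.filter fun X : Finset (V → Bool) => (X : Set (V → Bool)) ∈ P).toList.map
    PTthetaSS).foldr PTForm.bor PTForm.bot

theorem IsPT.defining (P : Set (Set (V → Bool))) : IsPT (PTdefining P) :=
  .foldr_bor fun _ hψ => by
    obtain ⟨X, -, rfl⟩ := List.mem_map.mp hψ
    exact .thetaSS X

variable [Nonempty V]

theorem ptSat_descr_iff (Y : Set (V → Bool)) (s : V → Bool) :
    PTSat Y (PTdescr s) ↔ Y ⊆ {s} := by
  have hne : (Finset.univ : Finset V).toList.map (PTlit s) ≠ [] := by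
    simp [Finset.univ_eq_empty_iff]
  simp only [PTdescr, ptSat_andList_iff Y hne, List.forall_mem_map, Finset.mem_toList,
    Finset.mem_univ, forall_const, ptSat_lit_iff]
  constructor
  · intro h t ht
    exact funext fun i => h i t ht
  · rintro h i t ht
    rw [h ht]

theorem ptSat_nsorAux_descr_iff (Y : Set (V → Bool)) (s : V → Bool) (l : List (V → Bool)) :
    PTSat Y (PTnsorAux (PTdescr s) (l.map PTdescr)) ↔ Y = ∅ ∨ Y = {t | t ∈ s :: l} := by
  induction l generalizing s Y with
  | nil =>
    simp only [List.map_nil, PTnsorAux, ptSat_descr_iff, Set.subset_singleton_iff_eq,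
      List.mem_singleton, Set.ofPred_eq_eq_singleton]
  | cons u r ih =>
    have hcons : {t | t ∈ s :: u :: r} = {s} ∪ {t | t ∈ u :: r} := by
      ext t
      simp
    simp only [List.map_cons, PTnsorAux, PTSat, ih, ptSat_descr_iff, hcons]
    constructor
    · rintro (hY | ⟨Z, W, rfl, hZ, hW, hZs, rfl | rfl⟩)
      · exact .inl hY
      · exact absurd rfl hW.ne_empty
      · rw [(hZ.subset_singleton_iff).mp hZs]
        exact .inr rfl
    · rintro (hY | rfl)
      · exact .inl hY
      · exact .inr ⟨{s}, _, rfl, Set.singleton_nonempty s, ⟨u, by simp⟩, le_rfl, .inr rfl⟩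

theorem ptSat_thetaSS_iff (Y : Set (V → Bool)) (X : Finset (V → Bool)) :
    PTSat Y (PTthetaSS X) ↔ Y = ∅ ∨ Y = X := by
  rw [PTthetaSS]
  have hX : (X : Set (V → Bool)) = {t | t ∈ X.toList} := by
    ext t
    simp
  rw [hX]
  cases X.toList with
  | nil => simp [PTnsorList, PTSat]
  | cons s l => exact ptSat_nsorAux_descr_iff Y s l

theorem ptSat_defining_iff (P : Set (Set (V → Bool))) (Y : Set (V → Bool)) :
    PTSat Y (PTdefining P) ↔ Y = ∅ ∨ Y ∈ P := by
  classical
  simp only [PTdefining, ptSat_foldr_bor_iff, List.mem_map, exists_exists_and_eq_and,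
    Finset.mem_toList, Finset.mem_filter, Finset.mem_univ, true_and, ptSat_thetaSS_iff]
  constructor
  · rintro (hY | ⟨X, hX, hY | rfl⟩)
    · exact .inl hY
    · exact .inl hY
    · exact .inr hX
  · rintro (hY | hY)
    · exact .inl hY
    · refine .inr ⟨Y.toFinite.toFinset, ?_, .inr ?_⟩ <;> simp [hY]

end Fintype

/-- **PT characterizes the team properties containing the empty team.**
(a) Every PT formula is satisfied by the empty team; (b) every team property
containing the empty team is definable by a PT formula. -/
theorem pt_characterizes_empty_team_properties (V : Type) [Fintype V] [Nonempty V] :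
    (∀ φ : PTForm V, IsPT φ → PTSat (∅ : Set (V → Bool)) φ) ∧
    (∀ P : Set (Set (V → Bool)), ∅ ∈ P →
      ∃ φ : PTForm V, IsPT φ ∧
        ∀ Y : Set (V → Bool), PTSat Y φ ↔ Y ∈ P) := by
  refine ⟨fun φ hφ => hφ.ptSat_empty, fun P hP => ⟨PTdefining P, .defining P, fun Y => ?_⟩⟩
  rw [ptSat_defining_iff, or_iff_right_of_imp]
  rintro rfl
  exact hP
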